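/- arXiv:2012.02999 — 6 statements merged into one kernel-verified Lean document; each statement's English description precedes it below -/
import Mathlib

section
/- Let q_k(A) be the backtrack-downweighted walk count matrices for parameter θ. Then q_0(A) = I, q_1(A) = A, q_2(A) = A² − μD, and for every k ≥ 2 the four-term recurrence q_{k+1}(A) = q_k(A)·A + μ·q_{k−1}(A)·(μI − D) − μ²·q_{k−2}(A)·(A − S) holds, where μ = 1 − θ. -/
open Matrix Finset

open scoped Classical in
/-- Backtrack-downweighted walk count matrix: entry `(i,j)` is the sum over all walks
of length `k` from `i` to `j` of `θ ^ (number of backtracking steps)`. -/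
noncomputable def btdwCount {n : ℕ} (A : Matrix (Fin n) (Fin n) ℝ) (θ : ℝ) (k : ℕ) :
    Matrix (Fin n) (Fin n) ℝ :=
  Matrix.of fun i j =>
    ∑ w : Fin (k + 1) → Fin n,
      (let w' : ℕ → Fin n := fun s => w ⟨s % (k + 1), Nat.mod_lt s (Nat.succ_pos k)⟩
       if w' 0 = i ∧ w' k = j ∧ (∀ s ∈ Finset.range k, A (w' s) (w' (s + 1)) = 1)
       then θ ^ ((Finset.range (k - 1)).filter fun s => w' s = w' (s + 2)).card
       else 0)

/-- Diagonal matrix `D` with `d_{ii} = (A²)_{ii}`. -/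
noncomputable def degDiag {n : ℕ} (A : Matrix (Fin n) (Fin n) ℝ) : Matrix (Fin n) (Fin n) ℝ :=
  Matrix.diagonal fun i => (A * A) i i

/-- Matrix `S` with `s_{ij} = a_{ij} a_{ji}`. -/
noncomputable def recipMat {n : ℕ} (A : Matrix (Fin n) (Fin n) ℝ) : Matrix (Fin n) (Fin n) ℝ :=
  Matrix.of fun i j => A i j * A j i

/-!
Write `T_k(i, b, c)` (`lastStepSum`) for the weighted walks of length `k + 1` from `i` whose
last step is `b → c`. Appending a step `c → d` multiplies the weight by `A c d`, and also by `θ`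
exactly when `d = b`. Summing over the last step gives `q_{k+2} = q_{k+1} A - μ R_k`, where `R_k`
(`backtrackSum`) collects the walks ending in a backtrack `c → b → c` whose final backtrack is not
yet downweighted. Unfolding `R_{k+1}` once more gives `q_{k+1} D - μ U_k`, where `U_k`
(`reciprocalSum`) collects the walks ending in a step `b → c` whose reverse edge exists. When the
entries of `A` are idempotent, `U_{k+1} = q_{k+1} S - μ R_k`, so the first identity turns `U_k`
into `q_k S - q_k A + q_{k+1}`, and substituting gives the four-term recurrence.
-/

namespace BacktrackWalk

section Walks

variable {α R : Type*}

-- The cyclic reading `w'` of a tuple in `btdwCount`; only the indices `s ≤ k` ever matter.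
def vertexAt {k : ℕ} (w : Fin (k + 1) → α) (s : ℕ) : α :=
  w ⟨s % (k + 1), Nat.mod_lt s (Nat.succ_pos k)⟩

lemma vertexAt_of_lt {k s : ℕ} (w : Fin (k + 1) → α) (h : s < k + 1) :
    vertexAt w s = w ⟨s, h⟩ := by
  simp only [vertexAt, Nat.mod_eq_of_lt h]

lemma vertexAt_zero {k : ℕ} (w : Fin (k + 1) → α) : vertexAt w 0 = w 0 :=
  vertexAt_of_lt w k.succ_pos

lemma vertexAt_snoc_of_le {k s : ℕ} (v : Fin (k + 1) → α) (c : α) (h : s ≤ k) :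
    vertexAt (Fin.snoc v c : Fin (k + 2) → α) s = vertexAt v s := by
  rw [vertexAt_of_lt _ (by omega), vertexAt_of_lt _ (by omega)]
  exact Fin.snoc_castSucc (α := fun _ => α) c v ⟨s, by omega⟩

lemma vertexAt_snoc_self {k : ℕ} (v : Fin (k + 1) → α) (c : α) :
    vertexAt (Fin.snoc v c : Fin (k + 2) → α) (k + 1) = c := by
  rw [vertexAt_of_lt _ (by omega)]
  exact Fin.snoc_last (α := fun _ => α) c v

lemma sum_fun_succ_eq_sum_snoc [AddCommMonoid R] [Fintype α] {k : ℕ}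
    (f : (Fin (k + 1) → α) → R) :
    ∑ w : Fin (k + 1) → α, f w = ∑ v : Fin k → α, ∑ c : α, f (Fin.snoc v c) := by
  rw [← (Fin.snocEquiv fun _ => α).sum_comp, Fintype.sum_prod_type, sum_comm]
  rfl

variable [DecidableEq α] [CommRing R] (A : Matrix α α R) (θ : R)

def walkWeight (k : ℕ) (w : ℕ → α) : R :=
  (∏ s ∈ range k, A (w s) (w (s + 1))) * ∏ s ∈ range (k - 1), if w s = w (s + 2) then θ else 1

lemma walkWeight_congr {k : ℕ} {w w' : ℕ → α} (h : ∀ s ≤ k, w s = w' s) :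
    walkWeight A θ k w = walkWeight A θ k w' := by
  unfold walkWeight
  congr 1
  · refine prod_congr rfl fun s hs => ?_
    rw [mem_range] at hs
    rw [h s (by omega), h (s + 1) (by omega)]
  · refine prod_congr rfl fun s hs => ?_
    rw [mem_range] at hs
    rw [h s (by omega), h (s + 2) (by omega)]

lemma walkWeight_one (w : ℕ → α) : walkWeight A θ 1 w = A (w 0) (w 1) := by
  simp [walkWeight]

lemma walkWeight_add_two (k : ℕ) (w : ℕ → α) :
    walkWeight A θ (k + 2) w =
      walkWeight A θ (k + 1) w * A (w (k + 1)) (w (k + 2)) *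
        if w k = w (k + 2) then θ else 1 := by
  rw [walkWeight, walkWeight, show k + 2 - 1 = k + 1 from rfl, Nat.add_sub_cancel]
  simp only [prod_range_succ]
  ring

lemma walkWeight_snoc {k : ℕ} (v : Fin (k + 2) → α) (c : α) :
    walkWeight A θ (k + 2) (vertexAt (Fin.snoc v c : Fin (k + 3) → α)) =
      walkWeight A θ (k + 1) (vertexAt v) * A (vertexAt v (k + 1)) c *
        if vertexAt v k = c then θ else 1 := by
  have hv : ∀ s ≤ k + 1, vertexAt (Fin.snoc v c : Fin (k + 3) → α) s = vertexAt v s :=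
    fun s hs => vertexAt_snoc_of_le v c hs
  rw [walkWeight_add_two, walkWeight_congr A θ hv, hv k (by omega), hv (k + 1) le_rfl,
    vertexAt_snoc_self]

lemma walkWeight_of_forall_eq_one {k : ℕ} {w : ℕ → α}
    (h : ∀ s ∈ range k, A (w s) (w (s + 1)) = 1) :
    walkWeight A θ k w = θ ^ #{s ∈ range (k - 1) | w s = w (s + 2)} := by
  rw [walkWeight, prod_eq_one h, one_mul, prod_ite, prod_const, prod_const_one, mul_one]

lemma walkWeight_eq_zero {k s : ℕ} {w : ℕ → α} (hs : s ∈ range k) (h : A (w s) (w (s + 1)) = 0) :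
    walkWeight A θ k w = 0 := by
  rw [walkWeight, prod_eq_zero hs h, zero_mul]

variable [Fintype α]

def walkSum (k : ℕ) : Matrix α α R :=
  Matrix.of fun i j => ∑ w : Fin (k + 1) → α,
    if vertexAt w 0 = i ∧ vertexAt w k = j then walkWeight A θ k (vertexAt w) else 0

def lastStepSum (k : ℕ) (i b c : α) : R :=
  ∑ v : Fin (k + 1) → α, if vertexAt v 0 = i ∧ vertexAt v k = b then
    walkWeight A θ (k + 1) (vertexAt (Fin.snoc v c : Fin (k + 2) → α)) else 0

lemma walkSum_zero : walkSum A θ 0 = 1 := by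
  ext i j
  rw [walkSum, of_apply, ← (Equiv.funUnique (Fin 1) α).symm.sum_comp]
  simp [vertexAt, walkWeight, one_apply, ite_and]

lemma walkSum_succ_apply (k : ℕ) (i c : α) :
    walkSum A θ (k + 1) i c = ∑ b, lastStepSum A θ k i b c := by
  simp only [walkSum, of_apply, lastStepSum]
  rw [sum_fun_succ_eq_sum_snoc]
  conv_rhs => rw [sum_comm]
  refine sum_congr rfl fun v _ => ?_
  simp only [vertexAt_snoc_of_le v _ (Nat.zero_le k), vertexAt_snoc_self]
  by_cases h : vertexAt v 0 = i <;> simp [h]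

lemma lastStepSum_zero (i b c : α) : lastStepSum A θ 0 i b c = if b = i then A b c else 0 := by
  rw [lastStepSum, ← (Equiv.funUnique (Fin 1) α).symm.sum_comp]
  simp only [zero_add, walkWeight_one, vertexAt_snoc_of_le _ _ (Nat.zero_le 0), vertexAt_snoc_self]
  by_cases h : b = i
  · subst h
    simp [vertexAt_zero]
  · simp [vertexAt_zero, ite_and, h, Ne.symm h]

lemma lastStepSum_succ (k : ℕ) (i b c : α) :
    lastStepSum A θ (k + 1) i b c =
      A b c * ∑ a, lastStepSum A θ k i a b * if a = c then θ else 1 := by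
  simp only [lastStepSum, walkWeight_snoc, sum_mul, mul_sum]
  rw [sum_fun_succ_eq_sum_snoc]
  conv_rhs => rw [sum_comm]
  refine sum_congr rfl fun u _ => ?_
  simp only [vertexAt_snoc_of_le u _ (Nat.zero_le k), vertexAt_snoc_of_le u _ le_rfl,
    vertexAt_snoc_self]
  rw [← mul_sum]
  by_cases h : vertexAt u 0 = i
  · simp only [h, true_and, ite_mul, zero_mul, sum_ite_eq', sum_ite_eq, mem_univ, if_true]
    ring
  · simp [h]

lemma walkSum_one : walkSum A θ 1 = A := by
  ext i c
  simp [walkSum_succ_apply, lastStepSum_zero]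

lemma lastStepSum_succ_eq_sub (k : ℕ) (i b c : α) :
    lastStepSum A θ (k + 1) i b c =
      A b c * (walkSum A θ (k + 1) i b - (1 - θ) * lastStepSum A θ k i c b) := by
  have split : ∀ a, lastStepSum A θ k i a b * (if a = c then θ else 1) =
      lastStepSum A θ k i a b - (1 - θ) * if a = c then lastStepSum A θ k i a b else 0 := by
    intro a
    split_ifs <;> ring
  rw [lastStepSum_succ, walkSum_succ_apply, sum_congr rfl fun a _ => split a, sum_sub_distrib,
    ← mul_sum, sum_ite_eq' univ c, if_pos (mem_univ c)]

def backtrackSum (k : ℕ) : Matrix α α R :=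
  Matrix.of fun i c => ∑ b, A b c * lastStepSum A θ k i c b

def reciprocalSum (k : ℕ) : Matrix α α R :=
  Matrix.of fun i c => ∑ b, (A ⊙ Aᵀ) b c * lastStepSum A θ k i b c

lemma walkSum_add_two (k : ℕ) :
    walkSum A θ (k + 2) = walkSum A θ (k + 1) * A - (1 - θ) • backtrackSum A θ k := by
  ext i c
  simp only [walkSum_succ_apply A θ (k + 1), lastStepSum_succ_eq_sub, Matrix.sub_apply,
    Matrix.smul_apply, smul_eq_mul, mul_apply, backtrackSum, of_apply, mul_sum, ← sum_sub_distrib]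
  exact sum_congr rfl fun b _ => by ring

lemma backtrackSum_zero : backtrackSum A θ 0 = diagonal fun i => (A * A) i i := by
  ext i c
  by_cases h : i = c
  · subst h
    simp [backtrackSum, lastStepSum_zero, mul_apply, mul_comm]
  · simp [backtrackSum, lastStepSum_zero, h, Ne.symm h]

lemma backtrackSum_succ (k : ℕ) :
    backtrackSum A θ (k + 1) =
      walkSum A θ (k + 1) * diagonal (fun i => (A * A) i i) - (1 - θ) • reciprocalSum A θ k := by
  ext i c
  rw [Matrix.sub_apply, mul_diagonal, mul_apply, mul_sum]
  simp only [backtrackSum, reciprocalSum, lastStepSum_succ_eq_sub, of_apply, Matrix.smul_apply,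
    smul_eq_mul, hadamard_apply, transpose_apply, mul_sum, ← sum_sub_distrib]
  exact sum_congr rfl fun b _ => by ring

lemma mul_lastStepSum_of_isIdempotentElem (hA : ∀ i j, IsIdempotentElem (A i j)) (k : ℕ)
    (i b c : α) : A b c * lastStepSum A θ k i b c = lastStepSum A θ k i b c := by
  cases k with
  | zero =>
    rw [lastStepSum_zero]
    split_ifs
    exacts [(hA b c).eq, mul_zero _]
  | succ k => rw [lastStepSum_succ, ← mul_assoc, (hA b c).eq]

lemma reciprocalSum_eq_of_isIdempotentElem (hA : ∀ i j, IsIdempotentElem (A i j)) (k : ℕ) :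
    reciprocalSum A θ k = walkSum A θ k * (A ⊙ Aᵀ) - walkSum A θ k * A + walkSum A θ (k + 1) := by
  cases k with
  | zero =>
    ext i c
    simp only [zero_add, reciprocalSum, walkSum_zero, walkSum_one, lastStepSum_zero, of_apply,
      hadamard_apply, transpose_apply, mul_ite, mul_zero, sum_ite_eq', mem_univ, if_true,
      Matrix.add_apply, Matrix.sub_apply, one_mul, sub_add_cancel]
    rw [mul_right_comm, (hA i c).eq]
  | succ k =>
    suffices reciprocalSum A θ (k + 1) =
        walkSum A θ (k + 1) * (A ⊙ Aᵀ) - (1 - θ) • backtrackSum A θ k by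
      rw [this, walkSum_add_two]
      abel
    ext i c
    rw [Matrix.sub_apply, mul_apply, Matrix.smul_apply, smul_eq_mul, backtrackSum, reciprocalSum,
      of_apply, of_apply, mul_sum, ← sum_sub_distrib]
    refine sum_congr rfl fun b _ => ?_
    rw [lastStepSum_succ_eq_sub, hadamard_apply, transpose_apply]
    linear_combination (A c b * walkSum A θ (k + 1) i b - (1 - θ) * lastStepSum A θ k i c b) *
        (hA b c).eq - (1 - θ) * A b c ^ 2 * mul_lastStepSum_of_isIdempotentElem A θ hA k i c b

lemma walkSum_add_three (hA : ∀ i j, IsIdempotentElem (A i j)) (k : ℕ) :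
    walkSum A θ (k + 3) =
      walkSum A θ (k + 2) * A +
        (1 - θ) • (walkSum A θ (k + 1) * ((1 - θ) • 1 - diagonal fun i => (A * A) i i)) -
        (1 - θ) ^ 2 • (walkSum A θ k * (A - A ⊙ Aᵀ)) := by
  rw [walkSum_add_two A θ (k + 1), backtrackSum_succ, reciprocalSum_eq_of_isIdempotentElem A θ hA]
  simp only [mul_sub, mul_smul_comm, mul_one]
  module

end Walks

lemma btdwCount_eq_walkSum {n : ℕ} (A : Matrix (Fin n) (Fin n) ℝ)
    (hA01 : ∀ i j, A i j = 0 ∨ A i j = 1) (θ : ℝ) (k : ℕ) :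
    btdwCount A θ k = walkSum A θ k := by
  ext i j
  refine sum_congr rfl fun w _ => ?_
  change (if vertexAt w 0 = i ∧ vertexAt w k = j ∧
      ∀ s ∈ range k, A (vertexAt w s) (vertexAt w (s + 1)) = 1 then _ else 0) = _
  by_cases hends : vertexAt w 0 = i ∧ vertexAt w k = j
  · rw [if_pos hends]
    by_cases hedges : ∀ s ∈ range k, A (vertexAt w s) (vertexAt w (s + 1)) = 1
    · rw [if_pos ⟨hends.1, hends.2, hedges⟩, walkWeight_of_forall_eq_one A θ hedges]
      -- the two sides differ only in the `Decidable` instances of the filter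
      congr
    · obtain ⟨s, hs, hne⟩ := not_forall₂.mp hedges
      rw [if_neg fun h => hedges h.2.2, walkWeight_eq_zero A θ hs ((hA01 _ _).resolve_right hne)]
  · rw [if_neg fun h => hends ⟨h.1, h.2.1⟩, if_neg hends]

end BacktrackWalk

open BacktrackWalk in
theorem btdw_recurrence_general {n : ℕ} (A : Matrix (Fin n) (Fin n) ℝ)
    (hA01 : ∀ i j, A i j = 0 ∨ A i j = 1)
    (θ : ℝ) (μ : ℝ) (hμ : μ = 1 - θ) :
    btdwCount A θ 0 = 1 ∧
    btdwCount A θ 1 = A ∧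
    btdwCount A θ 2 = A * A - μ • degDiag A ∧
    ∀ k, 2 ≤ k →
      btdwCount A θ (k + 1) =
        btdwCount A θ k * A + μ • (btdwCount A θ (k - 1) * (μ • 1 - degDiag A)) -
          μ ^ 2 • (btdwCount A θ (k - 2) * (A - recipMat A)) := by
  have hA : ∀ i j, IsIdempotentElem (A i j) := fun i j => by
    rcases hA01 i j with h | h <;> rw [h]
    exacts [IsIdempotentElem.zero, IsIdempotentElem.one]
  simp only [btdwCount_eq_walkSum A hA01, hμ]
  refine ⟨walkSum_zero A θ, walkSum_one A θ, ?_, fun k hk => ?_⟩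
  · rw [walkSum_add_two A θ 0, walkSum_one, backtrackSum_zero]
    rfl
  · obtain ⟨m, rfl⟩ := Nat.exists_eq_add_of_le' hk
    exact walkSum_add_three A θ hA m

/-- Theorem 3.1 (four-term recurrence for backtrack-downweighted walk counts,
right-sided version). -/
theorem btdw_recurrence {n : ℕ} (hn : 1 ≤ n) (A : Matrix (Fin n) (Fin n) ℝ)
    (hA01 : ∀ i j, A i j = 0 ∨ A i j = 1) (hAdiag : ∀ i, A i i = 0)
    (θ : ℝ) (hθ0 : 0 ≤ θ) (hθ1 : θ ≤ 1) (μ : ℝ) (hμ : μ = 1 - θ) :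
    btdwCount A θ 0 = 1 ∧
    btdwCount A θ 1 = A ∧
    btdwCount A θ 2 = A * A - μ • degDiag A ∧
    ∀ k, 2 ≤ k →
      btdwCount A θ (k + 1) =
        btdwCount A θ k * A + μ • (btdwCount A θ (k - 1) * (μ • 1 - degDiag A)) -
          μ ^ 2 • (btdwCount A θ (k - 2) * (A - recipMat A)) :=
  btdw_recurrence_general A hA01 θ μ hμ
end

section
/- Let q_k(A) be the backtrack-downweighted walk count matrices for parameter θ. Then for every k ≥ 2 the left-sided four-term recurrence q_{k+1}(A) = A·q_k(A) + μ·(μI − D)·q_{k−1}(A) − μ²·(A − S)·q_{k−2}(A) holds, where μ = 1 − θ. -/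
open Matrix Finset

/-!
Split the walks from `i` by their first step `i → p`, and write `R k i p j` for the weighted
count of those of length `k` ending at `j`. Removing the first step of a walk of length
`k + 2` leaves a walk of length `k + 1` from `p`, whose weight gains the factor `θ` exactly when
that walk returns to `i` in its first step; hence
`R (k + 2) i p j = a_ip (q_{k+1} p j - μ R (k + 1) p i j)`.
Applying this twice to `q_{k+3} i j = ∑ p, R (k + 3) i p j` produces the terms `A q_{k+2}` and
`-μ D q_{k+1}`, and leaves `μ² ∑ p, a_ip a_pi R (k + 1) i p j`. For a 0/1 matrix, the walks whose
first step is reciprocated are all walks minus those whose first step `i → p` has `a_pi = 0`;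
the latter cannot backtrack at their first step, so they contribute `(A - S) q_k`.
-/

namespace BTDW

variable {n : ℕ}

/-- The reading of a walk `w : Fin (k + 1) → Fin n` as a sequence used in `btdwCount`; only its
values at `s ≤ k` matter. -/
def walkSeq (k : ℕ) (w : Fin (k + 1) → Fin n) : ℕ → Fin n :=
  fun s => w ⟨s % (k + 1), Nat.mod_lt s (Nat.succ_pos k)⟩

lemma walkSeq_of_le {k s : ℕ} (w : Fin (k + 1) → Fin n) (hs : s ≤ k) :
    walkSeq k w s = w ⟨s, Nat.lt_succ_of_le hs⟩ :=
  congrArg w (Fin.ext (Nat.mod_eq_of_lt (Nat.lt_succ_of_le hs)))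

@[simp]
lemma walkSeq_cons_zero (k : ℕ) (x : Fin n) (t : Fin (k + 1) → Fin n) :
    walkSeq (k + 1) (Fin.cons x t) 0 = x :=
  walkSeq_of_le _ (Nat.zero_le _)

lemma walkSeq_cons_succ {k s : ℕ} (x : Fin n) (t : Fin (k + 1) → Fin n) (hs : s ≤ k) :
    walkSeq (k + 1) (Fin.cons x t) (s + 1) = walkSeq k t s := by
  rw [walkSeq_of_le _ (Nat.succ_le_succ hs), walkSeq_of_le _ hs]
  exact Fin.cons_succ (α := fun _ => Fin n) x t ⟨s, Nat.lt_succ_of_le hs⟩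

/-- Summing over walks of length `k + 1` that start at `i` is summing over their tails. -/
lemma sum_walkSeq_succ (k : ℕ) (i : Fin n) {F G : (ℕ → Fin n) → ℝ}
    (hG : ∀ u v, (∀ s ≤ k, u s = v s) → G u = G v)
    (hF : ∀ u, F u = if u 0 = i then G (fun s => u (s + 1)) else 0) :
    ∑ w : Fin (k + 2) → Fin n, F (walkSeq (k + 1) w) =
      ∑ t : Fin (k + 1) → Fin n, G (walkSeq k t) := by
  rw [← (Fin.consEquiv fun _ => Fin n).sum_comp, Fintype.sum_prod_type, Finset.sum_comm]
  refine Finset.sum_congr rfl fun t _ => ?_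
  have htail : G (fun s => walkSeq (k + 1) (Fin.cons i t) (s + 1)) = G (walkSeq k t) :=
    hG _ _ fun s hs => walkSeq_cons_succ i t hs
  simp [Fin.consEquiv, hF, htail]

variable (A : Matrix (Fin n) (Fin n) ℝ) (θ : ℝ)

/-- For a 0/1 matrix this is the weight of a walk in `btdwCount` (`ite_pow_card_eq_walkWeight`);
the product form makes it multiplicative under removing the first step. -/
noncomputable def walkWeight (k : ℕ) (u : ℕ → Fin n) : ℝ :=
  (∏ s ∈ range k, A (u s) (u (s + 1))) * ∏ s ∈ range (k - 1), if u s = u (s + 2) then θ else 1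

lemma walkWeight_congr {k : ℕ} {u v : ℕ → Fin n} (h : ∀ s ≤ k, u s = v s) :
    walkWeight A θ k u = walkWeight A θ k v := by
  unfold walkWeight
  congr 1
  · refine prod_congr rfl fun s hs => ?_
    have := mem_range.mp hs
    rw [h s (by omega), h (s + 1) (by omega)]
  · refine prod_congr rfl fun s hs => ?_
    have := mem_range.mp hs
    rw [h s (by omega), h (s + 2) (by omega)]

lemma walkWeight_zero (u : ℕ → Fin n) : walkWeight A θ 0 u = 1 := by
  simp [walkWeight]

lemma walkWeight_one (u : ℕ → Fin n) : walkWeight A θ 1 u = A (u 0) (u 1) := by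
  simp [walkWeight]

lemma walkWeight_succ_succ (k : ℕ) (u : ℕ → Fin n) :
    walkWeight A θ (k + 2) u =
      A (u 0) (u 1) * (if u 0 = u 2 then θ else 1) *
        walkWeight A θ (k + 1) (fun s => u (s + 1)) := by
  simp only [walkWeight, show k + 2 - 1 = k + 1 from rfl, Nat.add_sub_cancel,
    prod_range_succ' _ (k + 1), prod_range_succ' _ k]
  ring

lemma ite_pow_card_eq_walkWeight (hA01 : ∀ i j, A i j = 0 ∨ A i j = 1) (k : ℕ) (u : ℕ → Fin n) :
    (if ∀ s ∈ range k, A (u s) (u (s + 1)) = 1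
      then θ ^ #{s ∈ range (k - 1) | u s = u (s + 2)} else 0) = walkWeight A θ k u := by
  unfold walkWeight
  split_ifs with h
  · rw [prod_eq_one h, one_mul, prod_ite, prod_const, prod_const_one, mul_one]
  · obtain ⟨s, hs, hne⟩ := not_forall₂.mp h
    rw [prod_eq_zero hs ((hA01 _ _).resolve_right hne), zero_mul]

noncomputable def walkTerm (k : ℕ) (i j : Fin n) (u : ℕ → Fin n) : ℝ :=
  if u 0 = i ∧ u k = j then walkWeight A θ k u else 0

noncomputable def walkTermVia (k : ℕ) (i p j : Fin n) (u : ℕ → Fin n) : ℝ :=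
  if u 1 = p then walkTerm A θ k i j u else 0

noncomputable def walkSum (k : ℕ) : Matrix (Fin n) (Fin n) ℝ :=
  of fun i j => ∑ w : Fin (k + 1) → Fin n, walkTerm A θ k i j (walkSeq k w)

noncomputable def walkSumVia (k : ℕ) (i p j : Fin n) : ℝ :=
  ∑ w : Fin (k + 1) → Fin n, walkTermVia A θ k i p j (walkSeq k w)

lemma btdwCount_eq_walkSum (hA01 : ∀ i j, A i j = 0 ∨ A i j = 1) (k : ℕ) :
    btdwCount A θ k = walkSum A θ k := by
  ext i j
  refine sum_congr rfl fun w _ => ?_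
  change (if walkSeq k w 0 = i ∧ walkSeq k w k = j ∧
      ∀ s ∈ range k, A (walkSeq k w s) (walkSeq k w (s + 1)) = 1
    then θ ^ #{s ∈ range (k - 1) | walkSeq k w s = walkSeq k w (s + 2)} else 0) = _
  simp only [walkTerm, ← ite_pow_card_eq_walkWeight A θ hA01, ite_and]

lemma sum_walkSumVia (k : ℕ) (i j : Fin n) : ∑ p, walkSumVia A θ k i p j = walkSum A θ k i j := by
  simp only [walkSumVia, walkTermVia, walkSum, of_apply]
  rw [sum_comm]
  simp

lemma walkTerm_congr {k : ℕ} (i j : Fin n) {u v : ℕ → Fin n} (h : ∀ s ≤ k, u s = v s) :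
    walkTerm A θ k i j u = walkTerm A θ k i j v := by
  rw [walkTerm, walkTerm, h 0 (Nat.zero_le k), h k le_rfl, walkWeight_congr A θ h]

lemma walkTermVia_congr {k : ℕ} (hk : 1 ≤ k) (i p j : Fin n) {u v : ℕ → Fin n}
    (h : ∀ s ≤ k, u s = v s) : walkTermVia A θ k i p j u = walkTermVia A θ k i p j v := by
  rw [walkTermVia, walkTermVia, h 1 hk, walkTerm_congr A θ i j h]

lemma walkTermVia_one (i p j : Fin n) (u : ℕ → Fin n) :
    walkTermVia A θ 1 i p j u =
      if u 0 = i then A i p * walkTerm A θ 0 p j (fun s => u (s + 1)) else 0 := by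
  simp only [walkTermVia, walkTerm, walkWeight_one, walkWeight_zero, zero_add]
  by_cases h0 : u 0 = i <;> by_cases h1 : u 1 = p <;> simp [h0, h1]

lemma walkTermVia_succ_succ (k : ℕ) (i p j : Fin n) (u : ℕ → Fin n) :
    walkTermVia A θ (k + 2) i p j u =
      if u 0 = i then
        A i p * (walkTerm A θ (k + 1) p j (fun s => u (s + 1)) -
          (1 - θ) * walkTermVia A θ (k + 1) p i j (fun s => u (s + 1)))
      else 0 := by
  simp only [walkTermVia, walkTerm, walkWeight_succ_succ, zero_add]
  split_ifs <;> grind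

lemma walkSumVia_one (i p j : Fin n) : walkSumVia A θ 1 i p j = A i p * walkSum A θ 0 p j := by
  rw [walkSumVia, walkSum, of_apply, mul_sum]
  exact sum_walkSeq_succ 0 i (G := fun u => A i p * walkTerm A θ 0 p j u)
    (fun u v h => by rw [walkTerm_congr A θ p j h]) (walkTermVia_one A θ i p j)

lemma walkSumVia_succ_succ (k : ℕ) (i p j : Fin n) :
    walkSumVia A θ (k + 2) i p j =
      A i p * (walkSum A θ (k + 1) p j - (1 - θ) * walkSumVia A θ (k + 1) p i j) := by
  rw [walkSumVia, walkSumVia, walkSum, of_apply, mul_sub, mul_sum, mul_sum, mul_sum,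
    ← sum_sub_distrib]
  refine sum_walkSeq_succ (k + 1) i
    (G := fun u => A i p * walkTerm A θ (k + 1) p j u -
      A i p * ((1 - θ) * walkTermVia A θ (k + 1) p i j u)) (fun u v h => ?_) (fun u => ?_)
  · rw [walkTerm_congr A θ p j h, walkTermVia_congr A θ (Nat.le_add_left 1 k) p i j h]
  · rw [walkTermVia_succ_succ, mul_sub, mul_left_comm]

lemma walkSumVia_succ_eq_zero (k : ℕ) {i p : Fin n} (j : Fin n) (h : A i p = 0) :
    walkSumVia A θ (k + 1) i p j = 0 := by
  cases k with
  | zero => rw [walkSumVia_one, h, zero_mul]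
  | succ k => rw [walkSumVia_succ_succ, h, zero_mul]

/-- A first step `i → p` with `a_pi = 0` can never be backtracked. -/
lemma walkSumVia_succ_of_reverse_eq_zero (k : ℕ) {i p : Fin n} (j : Fin n) (h : A p i = 0) :
    walkSumVia A θ (k + 1) i p j = A i p * walkSum A θ k p j := by
  cases k with
  | zero => exact walkSumVia_one A θ i p j
  | succ k => rw [walkSumVia_succ_succ, walkSumVia_succ_eq_zero A θ k j h, mul_zero, sub_zero]

lemma mul_mul_walkSumVia_succ (hA01 : ∀ i j, A i j = 0 ∨ A i j = 1) (k : ℕ) (i p j : Fin n) :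
    A i p * A p i * walkSumVia A θ (k + 1) i p j =
      walkSumVia A θ (k + 1) i p j - (A i p - A i p * A p i) * walkSum A θ k p j := by
  rcases hA01 i p with hip | hip
  · rw [walkSumVia_succ_eq_zero A θ k j hip, hip]; ring
  rcases hA01 p i with hpi | hpi
  · rw [walkSumVia_succ_of_reverse_eq_zero A θ k j hpi, hip, hpi]; ring
  · rw [hip, hpi]; ring

lemma walkSum_succ_succ_succ (hA01 : ∀ i j, A i j = 0 ∨ A i j = 1) (k : ℕ) :
    walkSum A θ (k + 3) =
      A * walkSum A θ (k + 2) + (1 - θ) • (((1 - θ) • 1 - degDiag A) * walkSum A θ (k + 1)) -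
        (1 - θ) ^ 2 • ((A - recipMat A) * walkSum A θ k) := by
  ext i j
  have hfirst : ∀ p, walkSumVia A θ (k + 3) i p j =
      A i p * walkSum A θ (k + 2) p j - (1 - θ) * (A i p * A p i) * walkSum A θ (k + 1) i j +
        (1 - θ) ^ 2 * (walkSumVia A θ (k + 1) i p j -
          (A i p - A i p * A p i) * walkSum A θ k p j) := fun p => by
    rw [walkSumVia_succ_succ, walkSumVia_succ_succ]
    linear_combination (1 - θ) ^ 2 * mul_mul_walkSumVia_succ A θ hA01 k i p j
  rw [← sum_walkSumVia, sum_congr rfl fun p _ => hfirst p]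
  simp only [sum_add_distrib, sum_sub_distrib, ← mul_sum, ← sum_mul, sum_walkSumVia]
  simp only [Matrix.add_apply, Matrix.sub_apply, Matrix.smul_apply, smul_eq_mul, Matrix.sub_mul,
    Matrix.smul_mul, Matrix.one_mul, degDiag, diagonal_mul]
  simp only [Matrix.mul_apply, recipMat, of_apply, sub_mul, sum_sub_distrib]
  ring

end BTDW

theorem btdw_recurrence_left_general {n : ℕ} (A : Matrix (Fin n) (Fin n) ℝ)
    (hA01 : ∀ i j, A i j = 0 ∨ A i j = 1)
    (θ : ℝ) (μ : ℝ) (hμ : μ = 1 - θ) :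
    ∀ k, 2 ≤ k →
      btdwCount A θ (k + 1) =
        A * btdwCount A θ k + μ • ((μ • 1 - degDiag A) * btdwCount A θ (k - 1)) -
          μ ^ 2 • ((A - recipMat A) * btdwCount A θ (k - 2)) := by
  intro k hk
  obtain ⟨m, rfl⟩ := Nat.exists_eq_add_of_le' hk
  subst hμ
  simp only [BTDW.btdwCount_eq_walkSum A θ hA01, Nat.add_sub_cancel]
  exact BTDW.walkSum_succ_succ_succ A θ hA01 m

/-- Corollary 3.2 (left-sided four-term recurrence for backtrack-downweighted
walk counts). -/
theorem btdw_recurrence_left {n : ℕ} (hn : 1 ≤ n) (A : Matrix (Fin n) (Fin n) ℝ)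
    (hA01 : ∀ i j, A i j = 0 ∨ A i j = 1) (hAdiag : ∀ i, A i i = 0)
    (θ : ℝ) (hθ0 : 0 ≤ θ) (hθ1 : θ ≤ 1) (μ : ℝ) (hμ : μ = 1 - θ) :
    ∀ k, 2 ≤ k →
      btdwCount A θ (k + 1) =
        A * btdwCount A θ k + μ • ((μ • 1 - degDiag A) * btdwCount A θ (k - 1)) -
          μ ^ 2 • ((A - recipMat A) * btdwCount A θ (k - 2)) :=
  btdw_recurrence_left_general A hA01 θ μ hμ
end

section
/- Let A be the adjacency matrix of the star graph S_{1,m}. Then for every k ≥ 0 and every θ ∈ [0,1], the odd-length BTDW count matrices satisfy q_{2k+1}(A) = η^k·A, where η = θ(θ + m − 1). -/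
open Matrix Finset

/-- Adjacency matrix of the star graph `S_{1,m}` on `m + 1` nodes: node `0` (the hub)
is joined to every other node, and there are no other edges. -/
def starAdj (m : ℕ) : Matrix (Fin (m + 1)) (Fin (m + 1)) ℝ :=
  Matrix.of fun i j => if (i = 0 ∧ j ≠ 0) ∨ (i ≠ 0 ∧ j = 0) then 1 else 0

/-!
Refine the count by the penultimate vertex: appending a step `j → l` to a walk whose last step
is `p → j` adds a backtrack exactly when `l = p`, so the refined counts satisfy a first-order
recursion. Walks on the star alternate between the hub and the leaves; every hub–leaf–hub
pattern is a backtrack, and a leaf–hub–leaf pattern is one exactly when the two leaves coincide.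
Extending a walk by two steps therefore multiplies its weight by `θ`, and by a further `θ` or `1`
according as the new leaf repeats the previous one; summing over the `m` leaves gives the factor
`θ (θ + m - 1)`.
-/

theorem sum_fun_fin_succ_eq_sum_snoc {α β : Type*} [Fintype α] [AddCommMonoid β] {k : ℕ}
    (F : (Fin (k + 1) → α) → β) :
    ∑ v, F v = ∑ w : Fin k → α, ∑ x, F (Fin.snoc w x) := by
  rw [← (Fin.snocEquiv fun _ => α).sum_comp, Fintype.sum_prod_type, Finset.sum_comm]
  rfl

theorem sum_ite_eq_mul_self {ι R : Type*} [Fintype ι] [DecidableEq ι] [CommRing R]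
    (θ c : R) (b : ι) :
    ∑ a, (if a = b then θ * c else c) = (θ + Fintype.card ι - 1) * c := by
  have h : ∀ a, (if a = b then θ * c else c) = (if a = b then (θ - 1) * c else 0) + c := by
    intro a; split_ifs <;> ring
  simp only [h, Finset.sum_add_distrib, Finset.sum_ite_eq', Finset.mem_univ, if_true,
    Finset.sum_const, Finset.card_univ, nsmul_eq_mul]
  ring

theorem sum_sum_ite_eq_mul {ι R : Type*} [Fintype ι] [DecidableEq ι] [CommRing R]
    (θ : R) (f : ι → R) :
    ∑ a, ∑ b, (if b = a then θ * f b else f b) = (θ + Fintype.card ι - 1) * ∑ b, f b := by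
  rw [Finset.sum_comm, Finset.mul_sum]
  refine Finset.sum_congr rfl fun b _ => ?_
  simp_rw [@eq_comm _ b]
  exact sum_ite_eq_mul_self θ (f b) b

section Walks

variable {n : ℕ} (A : Matrix (Fin n) (Fin n) ℝ) (θ : ℝ)

def walkSeq {k : ℕ} (w : Fin (k + 1) → Fin n) (s : ℕ) : Fin n :=
  w ⟨s % (k + 1), Nat.mod_lt s (Nat.succ_pos k)⟩

open scoped Classical in
noncomputable def walkWeight (k : ℕ) (f : ℕ → Fin n) (i j : Fin n) : ℝ :=
  if f 0 = i ∧ f k = j ∧ (∀ s ∈ Finset.range k, A (f s) (f (s + 1)) = 1)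
  then θ ^ ((Finset.range (k - 1)).filter fun s => f s = f (s + 2)).card else 0

theorem btdwCount_apply (k : ℕ) (i j : Fin n) :
    btdwCount A θ k i j = ∑ w : Fin (k + 1) → Fin n, walkWeight A θ k (walkSeq w) i j :=
  rfl

theorem walkSeq_of_lt {k : ℕ} (w : Fin (k + 1) → Fin n) {s : ℕ} (hs : s < k + 1) :
    walkSeq w s = w ⟨s, hs⟩ := by
  simp only [walkSeq, Nat.mod_eq_of_lt hs]

theorem walkSeq_snoc_of_le {k : ℕ} (w : Fin (k + 1) → Fin n) (x : Fin n) {s : ℕ} (hs : s ≤ k) :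
    walkSeq (Fin.snoc w x : Fin (k + 2) → Fin n) s = walkSeq w s := by
  rw [walkSeq_of_lt _ (by omega), walkSeq_of_lt _ (by omega)]
  exact Fin.snoc_castSucc (i := ⟨s, by omega⟩) ..

theorem walkSeq_snoc_self {k : ℕ} (w : Fin (k + 1) → Fin n) (x : Fin n) :
    walkSeq (Fin.snoc w x : Fin (k + 2) → Fin n) (k + 1) = x := by
  rw [walkSeq_of_lt _ (by omega)]
  exact Fin.snoc_last (n := k + 1) ..

theorem walkWeight_congr {k : ℕ} {f g : ℕ → Fin n} (h : ∀ s ≤ k, f s = g s) (i j : Fin n) :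
    walkWeight A θ k f i j = walkWeight A θ k g i j := by
  have hr : ∀ s ∈ Finset.range k, f s = g s ∧ f (s + 1) = g (s + 1) := fun s hs => by
    have := Finset.mem_range.1 hs
    exact ⟨h s (by omega), h (s + 1) (by omega)⟩
  have hf : (Finset.range (k - 1)).filter (fun s => f s = f (s + 2)) =
      (Finset.range (k - 1)).filter (fun s => g s = g (s + 2)) :=
    Finset.filter_congr fun s hs => by
      have := Finset.mem_range.1 hs
      rw [h s (by omega), h (s + 2) (by omega)]
  simp only [walkWeight, h 0 (Nat.zero_le _), h k le_rfl, hf]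
  congr 1
  exact propext (and_congr_right fun _ => and_congr_right fun _ =>
    forall₂_congr fun s hs => by rw [(hr s hs).1, (hr s hs).2])

theorem walkWeight_eq_zero_of_ne {k : ℕ} {f : ℕ → Fin n} {j : Fin n} (h : f k ≠ j) (i : Fin n) :
    walkWeight A θ k f i j = 0 := by
  simp [walkWeight, h]

theorem walkWeight_one (f : ℕ → Fin n) (i j : Fin n) :
    walkWeight A θ 1 f i j = if f 0 = i ∧ f 1 = j ∧ A i j = 1 then 1 else 0 := by
  simp only [walkWeight, Finset.range_one, Finset.mem_singleton, forall_eq, zero_add,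
    Nat.sub_self, Finset.range_zero, Finset.filter_empty, Finset.card_empty, pow_zero]
  congr 1
  exact propext (and_congr_right fun h0 => and_congr_right fun h1 => by rw [h0, h1])

theorem walkWeight_add_two (k : ℕ) (f : ℕ → Fin n) (i l : Fin n) :
    walkWeight A θ (k + 2) f i l =
      if f (k + 2) = l ∧ A (f (k + 1)) l = 1 then
        (if f k = l then θ else 1) * walkWeight A θ (k + 1) f i (f (k + 1))
      else 0 := by
  have hcard : ((Finset.range (k + 1)).filter fun s => f s = f (s + 2)).card =
      (if f k = f (k + 2) then 1 else 0) +
        ((Finset.range k).filter fun s => f s = f (s + 2)).card := by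
    rw [Finset.range_add_one, Finset.filter_insert]
    split_ifs with h
    · rw [Finset.card_insert_of_notMem (by simp), add_comm]
    · rw [zero_add]
  simp only [walkWeight, Finset.range_add_one (n := k + 1), Finset.forall_mem_insert,
    show k + 2 - 1 = k + 1 by omega, Nat.add_sub_cancel, hcard]
  by_cases hl : f (k + 2) = l <;> by_cases ha : A (f (k + 1)) l = 1 <;> by_cases hb : f k = l <;>
    simp_all [pow_add]

noncomputable def btdwPenult (k : ℕ) (i p j : Fin n) : ℝ :=
  ∑ w : Fin (k + 2) → Fin n, if walkSeq w k = p then walkWeight A θ (k + 1) (walkSeq w) i j else 0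

theorem btdwCount_succ_apply (k : ℕ) (i j : Fin n) :
    btdwCount A θ (k + 1) i j = ∑ p, btdwPenult A θ k i p j := by
  simp only [btdwCount_apply, btdwPenult]
  rw [Finset.sum_comm]
  simp

theorem btdwPenult_succ (k : ℕ) (i j l : Fin n) :
    btdwPenult A θ (k + 1) i j l =
      if A j l = 1 then ∑ p, (if p = l then θ else 1) * btdwPenult A θ k i p j else 0 := by
  have hsnoc : ∀ (w : Fin (k + 2) → Fin n) (x : Fin n),
      (if walkSeq (Fin.snoc w x : Fin (k + 3) → Fin n) (k + 1) = j then
        walkWeight A θ (k + 2) (walkSeq (Fin.snoc w x : Fin (k + 3) → Fin n)) i l else 0) =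
      if x = l then
        (if A j l = 1 then
          (if walkSeq w k = l then θ else 1) * walkWeight A θ (k + 1) (walkSeq w) i j else 0)
      else 0 := by
    intro w x
    rw [walkWeight_add_two, walkSeq_snoc_self, walkSeq_snoc_of_le _ _ le_rfl,
      walkSeq_snoc_of_le _ _ (Nat.le_succ k),
      walkWeight_congr A θ (fun s hs => walkSeq_snoc_of_le w x hs)]
    by_cases hj : walkSeq w (k + 1) = j
    · subst hj
      by_cases hx : x = l <;> simp [hx]
    · simp [hj, walkWeight_eq_zero_of_ne A θ hj]
  rw [btdwPenult, sum_fun_fin_succ_eq_sum_snoc]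
  simp only [hsnoc, Finset.sum_ite_eq', Finset.mem_univ, if_true]
  split_ifs
  · simp only [btdwPenult, Finset.mul_sum, mul_ite, mul_zero]
    rw [Finset.sum_comm]
    simp
  · exact Finset.sum_const_zero

theorem btdwPenult_zero (i p j : Fin n) :
    btdwPenult A θ 0 i p j = if p = i ∧ A i j = 1 then 1 else 0 := by
  rw [btdwPenult, ← (piFinTwoEquiv fun _ => Fin n).symm.sum_comp, Fintype.sum_prod_type]
  have hseq : ∀ a b, walkSeq ((piFinTwoEquiv fun _ => Fin n).symm (a, b)) 0 = a ∧
      walkSeq ((piFinTwoEquiv fun _ => Fin n).symm (a, b)) 1 = b := fun _ _ => ⟨rfl, rfl⟩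
  simp only [zero_add, walkWeight_one, hseq, ite_and]
  simp

theorem btdwPenult_eq_zero_of_ne_one {k : ℕ} {i p j : Fin n} (h : A p j ≠ 1) :
    btdwPenult A θ k i p j = 0 := by
  cases k with
  | zero =>
    rw [btdwPenult_zero, if_neg]
    rintro ⟨rfl, hp⟩
    exact h hp
  | succ k => rw [btdwPenult_succ, if_neg h]

end Walks

section Star

variable {m : ℕ}

@[simp] theorem starAdj_zero_zero : starAdj m 0 0 = 0 := by simp [starAdj]
@[simp] theorem starAdj_zero_succ (a : Fin m) : starAdj m 0 a.succ = 1 := by simp [starAdj]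
@[simp] theorem starAdj_succ_zero (a : Fin m) : starAdj m a.succ 0 = 1 := by simp [starAdj]
@[simp] theorem starAdj_succ_succ (a b : Fin m) : starAdj m a.succ b.succ = 0 := by simp [starAdj]

theorem btdwPenult_starAdj_zero (θ : ℝ) (k : ℕ) (p j : Fin (m + 1)) :
    btdwPenult (starAdj m) θ (2 * k) 0 p j =
      if p = 0 ∧ j ≠ 0 then (θ * (θ + m - 1)) ^ k else 0 := by
  induction k generalizing p j with
  | zero =>
    rw [btdwPenult_zero]
    cases p using Fin.cases <;> cases j using Fin.cases <;> simp
  | succ k ih =>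
    rw [show 2 * (k + 1) = 2 * k + 1 + 1 by ring, btdwPenult_succ]
    simp only [btdwPenult_succ, ih]
    cases p using Fin.cases <;> cases j using Fin.cases <;>
      simp [Fin.sum_univ_succ, sum_ite_eq_mul_self, pow_succ, mul_comm, mul_left_comm, mul_assoc]

theorem btdwPenult_starAdj_succ_succ (θ : ℝ) (k : ℕ) (a b : Fin m) (p : Fin (m + 1)) :
    btdwPenult (starAdj m) θ (2 * k) a.succ p b.succ = 0 := by
  induction k generalizing p b with
  | zero =>
    rw [btdwPenult_zero]
    simp
  | succ k ih =>
    rw [show 2 * (k + 1) = 2 * k + 1 + 1 by ring, btdwPenult_succ]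
    simp only [btdwPenult_succ]
    cases p using Fin.cases <;> simp [Fin.sum_univ_succ, ih]

theorem sum_btdwPenult_starAdj_succ (θ : ℝ) (k : ℕ) (a : Fin m) :
    ∑ p, btdwPenult (starAdj m) θ (2 * k) a.succ p 0 = (θ * (θ + m - 1)) ^ k := by
  induction k with
  | zero =>
    simp [btdwPenult_zero]
  | succ k ih =>
    have hub : ∀ l, btdwPenult (starAdj m) θ l a.succ 0 0 = 0 := fun _ =>
      btdwPenult_eq_zero_of_ne_one _ _ (by simp)
    have hstep : ∀ p : Fin m, btdwPenult (starAdj m) θ (2 * k + 1 + 1) a.succ p.succ 0 =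
        θ * ∑ q : Fin m, (if q = p then θ * btdwPenult (starAdj m) θ (2 * k) a.succ q.succ 0
          else btdwPenult (starAdj m) θ (2 * k) a.succ q.succ 0) := by
      intro p
      simp [btdwPenult_succ, Fin.sum_univ_succ, hub]
    rw [Fin.sum_univ_succ, hub, zero_add] at ih ⊢
    rw [show 2 * (k + 1) = 2 * k + 1 + 1 by ring, Finset.sum_congr rfl fun p _ => hstep p,
      ← Finset.mul_sum, sum_sum_ite_eq_mul, ih, Fintype.card_fin]
    ring

end Star

theorem btdw_star_odd_general (m : ℕ) (θ : ℝ)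
    (η : ℝ) (hη : η = θ * (θ + m - 1)) (k : ℕ) :
    btdwCount (starAdj m) θ (2 * k + 1) = η ^ k • starAdj m := by
  subst hη
  ext i j
  rw [btdwCount_succ_apply, Matrix.smul_apply, smul_eq_mul]
  cases i using Fin.cases with
  | zero => cases j using Fin.cases <;> simp [btdwPenult_starAdj_zero]
  | succ a =>
    cases j using Fin.cases <;> simp [sum_btdwPenult_starAdj_succ, btdwPenult_starAdj_succ_succ]

/-- Theorem 5.1(i): on the star graph `S_{1,m}`, the odd BTDW count matrices satisfy
`q_{2k+1}(A) = η^k A` where `η = θ(θ + m − 1)`. -/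
theorem btdw_star_odd (m : ℕ) (hm : 1 ≤ m) (θ : ℝ) (hθ0 : 0 ≤ θ) (hθ1 : θ ≤ 1)
    (η : ℝ) (hη : η = θ * (θ + m - 1)) (k : ℕ) :
    btdwCount (starAdj m) θ (2 * k + 1) = η ^ k • starAdj m :=
  btdw_star_odd_general m θ η hη k
end

section
/- If α ≥ 0 satisfies α·ρ(Z) < 1, where ρ(Z) is the spectral radius of the block matrix Z, then the matrix power series Σ_{k=0}^∞ α^k q_k(A) converges. -/
open Matrix Finset

/-- The block matrix `Z = [[0, I, 0], [0, 0, I], [−μ²(A−S), μ(μI−D), A]]` with `μ = 1 − θ`. -/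
noncomputable def Zmat {n : ℕ} (A : Matrix (Fin n) (Fin n) ℝ) (θ : ℝ) :
    Matrix ((Fin n ⊕ Fin n) ⊕ Fin n) ((Fin n ⊕ Fin n) ⊕ Fin n) ℝ :=
  Matrix.fromBlocks
    (Matrix.fromBlocks 0 1 0 0)
    (Matrix.fromRows 0 1)
    (Matrix.fromCols (-((1 - θ) ^ 2) • (A - recipMat A)) ((1 - θ) • ((1 - θ) • 1 - degDiag A)))
    A

/-- Stack three `n × n` matrices vertically into a `3n × n` matrix. -/
noncomputable def stack3 {n : ℕ} (X Y W : Matrix (Fin n) (Fin n) ℝ) :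
    Matrix ((Fin n ⊕ Fin n) ⊕ Fin n) (Fin n) ℝ :=
  Matrix.fromRows (Matrix.fromRows X Y) W

/-!
Splitting off the first edge, let `W k u v j` (`Btdw.edgeBtdwCount`) weigh the walks of length
`k + 1` from `u` to `j` that start with the edge `u → v`. Continuing from `v`, the only new
backtrack is a return to `u`, so `W (k+1) u v j = a_{uv} (q_{k+1}(v, j) - μ W k v u j)`. Summing
this identity against `A`, and again against `S`, closes up into the recurrence
`q_{k+4} = -μ²(A - S) q_{k+1} + μ(μI - D) q_{k+2} + A q_{k+3}`,
that is `Z^k [q₁; q₂; q₃] = [q_{k+1}; q_{k+2}; q_{k+3}]`. Finally `Σ zᵏ Zᵏ` converges for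
`|z| ρ(Z) < 1`, because it is the Taylor series of the resolvent `z ↦ (1 - z Z)⁻¹`, which is
holomorphic on the disc of radius `ρ(Z)⁻¹`.
-/

section SpectralRadius

open scoped NNReal ENNReal

theorem summable_smul_pow_of_enorm_mul_spectralRadius_lt_one {𝔸 : Type*} [NormedRing 𝔸]
    [NormedAlgebra ℂ 𝔸] [CompleteSpace 𝔸] (a : 𝔸) {z : ℂ}
    (h : ‖z‖ₑ * spectralRadius ℂ a < 1) : Summable fun k : ℕ => z ^ k • a ^ k := by
  rcases eq_or_ne z 0 with rfl | hz
  · exact summable_of_ne_finset_zero (s := {0}) fun k hk => by simp_all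
  have hz_lt : ‖z‖ₑ < (spectralRadius ℂ a)⁻¹ := by
    rw [ENNReal.lt_inv_iff_lt_inv, ← one_div, ENNReal.lt_div_iff_mul_lt (.inl (by simpa using hz))
      (.inl enorm_ne_top), mul_comm]
    exact h
  obtain ⟨r, hzr, hr⟩ := ENNReal.lt_iff_exists_nnreal_btwn.mp hz_lt
  let p : FormalMultilinearSeries ℂ ℂ 𝔸 := fun k =>
    ContinuousMultilinearMap.mkPiRing ℂ (Fin k) (a ^ k)
  have hp : (r : ℝ≥0∞) ≤ p.radius :=
    ((spectrum.hasFPowerSeriesOnBall_inverse_one_sub_smul ℂ a).exchange_radius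
      ((spectrum.differentiableOn_inverse_one_sub_smul hr).hasFPowerSeriesOnBall
        (ENNReal.coe_pos.mp (pos_of_gt hzr)))).r_le
  simpa [p] using p.summable (x := z) (by simpa using hzr.trans_le hp)

-- Any Banach algebra norm will do here: summability only sees the product topology.
attribute [local instance] Matrix.linftyOpNormedRing Matrix.linftyOpNormedAlgebra in
theorem Matrix.summable_smul_pow_of_mul_spectralRadius_lt_one {ι : Type*} [Fintype ι]
    [DecidableEq ι] (M : Matrix ι ι ℝ) {α : ℝ} (hα : 0 ≤ α)
    (h : ENNReal.ofReal α * spectralRadius ℂ (M.map Complex.ofReal) < 1) :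
    Summable fun k : ℕ => α ^ k • M ^ k := by
  have hsum := summable_smul_pow_of_enorm_mul_spectralRadius_lt_one (M.map Complex.ofReal)
    (z := α) (by rwa [← ofReal_norm, Complex.norm_real, Real.norm_of_nonneg hα])
  have hpow (k : ℕ) : M.map Complex.ofReal ^ k = (M ^ k).map Complex.ofReal :=
    (M.map_pow Complex.ofRealHom k).symm
  refine Pi.summable.2 fun i => Pi.summable.2 fun j => Complex.summable_ofReal.1 ?_
  convert Pi.summable.1 (Pi.summable.1 hsum i) j using 2 with k
  simp [hpow]

end SpectralRadius

theorem Summable.matrix_mul_right {β ι κ m R : Type*} [Fintype κ] [NonUnitalNonAssocSemiring R]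
    [TopologicalSpace R] [IsTopologicalSemiring R] {f : β → Matrix ι κ R} (hf : Summable f)
    (V : Matrix κ m R) : Summable fun k => f k * V := by
  refine Pi.summable.2 fun i => Pi.summable.2 fun j => ?_
  simp only [mul_apply]
  exact summable_sum fun b _ => (Pi.summable.1 (Pi.summable.1 hf i) b).mul_right _

namespace Btdw

variable {n : ℕ}

-- The sequence `w'` of `btdwCount`; only its values at `s ≤ k` are ever used.
def walkSeq {k : ℕ} (w : Fin (k + 1) → Fin n) (s : ℕ) : Fin n :=
  w ⟨s % (k + 1), Nat.mod_lt s k.succ_pos⟩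

lemma walkSeq_of_le {k s : ℕ} (w : Fin (k + 1) → Fin n) (hs : s ≤ k) :
    walkSeq w s = w ⟨s, Nat.lt_succ_of_le hs⟩ := by
  simp [walkSeq, Nat.mod_eq_of_lt (Nat.lt_succ_of_le hs)]

lemma walkSeq_cons_zero {k : ℕ} (x : Fin n) (v : Fin (k + 1) → Fin n) :
    walkSeq (Fin.cons x v : Fin (k + 2) → Fin n) 0 = x := by
  simp [walkSeq]

lemma walkSeq_cons_succ {k s : ℕ} (x : Fin n) (v : Fin (k + 1) → Fin n) (hs : s ≤ k) :
    walkSeq (Fin.cons x v : Fin (k + 2) → Fin n) (s + 1) = walkSeq v s := by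
  rw [walkSeq_of_le _ (by omega), walkSeq_of_le _ hs]
  exact Fin.cons_succ (α := fun _ => Fin n) x v ⟨s, Nat.lt_succ_of_le hs⟩

variable (A : Matrix (Fin n) (Fin n) ℝ) (θ : ℝ)

noncomputable def walkWeight (k : ℕ) (w : ℕ → Fin n) : ℝ :=
  (∏ s ∈ range k, A (w s) (w (s + 1))) *
    ∏ s ∈ range (k - 1), if w s = w (s + 2) then θ else 1

lemma walkWeight_congr {k : ℕ} {w w' : ℕ → Fin n} (h : ∀ s ≤ k, w s = w' s) :
    walkWeight A θ k w = walkWeight A θ k w' := by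
  unfold walkWeight
  congr 1 <;> refine prod_congr rfl fun s hs => ?_ <;> rw [mem_range] at hs
  · rw [h s (by omega), h (s + 1) (by omega)]
  · rw [h s (by omega), h (s + 2) (by omega)]

lemma walkWeight_one (w : ℕ → Fin n) : walkWeight A θ 1 w = A (w 0) (w 1) := by
  simp [walkWeight]

lemma walkWeight_add_two (k : ℕ) (w : ℕ → Fin n) :
    walkWeight A θ (k + 2) w = A (w 0) (w 1) * (if w 0 = w 2 then θ else 1) *
      walkWeight A θ (k + 1) (fun s => w (s + 1)) := by
  simp only [walkWeight, show k + 2 - 1 = k + 1 from rfl, Nat.add_sub_cancel, prod_range_succ']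
  ring

lemma walkWeight_walkSeq_cons {k : ℕ} (x : Fin n) (v : Fin (k + 2) → Fin n) :
    walkWeight A θ (k + 2) (walkSeq (Fin.cons x v : Fin (k + 3) → Fin n)) =
      A x (v 0) * (if x = v 1 then θ else 1) * walkWeight A θ (k + 1) (walkSeq v) := by
  rw [walkWeight_add_two, walkSeq_cons_zero, walkSeq_cons_succ _ _ (by omega),
    walkSeq_cons_succ _ _ (by omega), walkSeq_of_le v (by omega), walkSeq_of_le v (by omega),
    walkWeight_congr A θ fun s hs => walkSeq_cons_succ x v hs]
  rfl

def walkTuples (k : ℕ) (i j : Fin n) : Finset (Fin (k + 1) → Fin n) :=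
  {w | w 0 = i ∧ w (Fin.last k) = j}

lemma btdwCount_apply (hA : ∀ i j, A i j = 0 ∨ A i j = 1) (k : ℕ) (i j : Fin n) :
    btdwCount A θ k i j = ∑ w ∈ walkTuples k i j, walkWeight A θ k (walkSeq w) := by
  rw [walkTuples, sum_filter]
  refine sum_congr rfl fun w _ => ?_
  have hedges : ∏ s ∈ range k, A (walkSeq w s) (walkSeq w (s + 1)) =
      if ∀ s ∈ range k, A (walkSeq w s) (walkSeq w (s + 1)) = 1 then 1 else 0 := by
    split_ifs with h
    · exact prod_eq_one h
    · push Not at h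
      obtain ⟨s, hs, hne⟩ := h
      exact prod_eq_zero hs ((hA _ _).resolve_right hne)
  have hbacktracks : ∏ s ∈ range (k - 1), (if walkSeq w s = walkSeq w (s + 2) then θ else 1) =
      θ ^ #{s ∈ range (k - 1) | walkSeq w s = walkSeq w (s + 2)} := by
    rw [prod_ite, prod_const, prod_const_one, mul_one]
  have hfirst : walkSeq w 0 = w 0 := walkSeq_of_le w k.zero_le
  have hlast : walkSeq w k = w (Fin.last k) := walkSeq_of_le w le_rfl
  rw [walkWeight, hedges, hbacktracks, ← hfirst, ← hlast, ite_mul, one_mul, zero_mul,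
    ← ite_and]
  exact if_congr and_assoc.symm rfl rfl

-- The walks of length `k + 1` from `u` to `j` whose first step is `u → v`
-- (`sum_walkTuples_filter_eq_edgeBtdwCount`).
noncomputable def edgeBtdwCount : ℕ → Fin n → Fin n → Fin n → ℝ
  | 0, u, v, j => A u v * if v = j then 1 else 0
  | k + 1, u, v, j => A u v * ∑ t, (if u = t then θ else 1) * edgeBtdwCount k v t j

lemma sum_walkTuples_cons {k : ℕ} (u v j : Fin n) (F : (Fin (k + 3) → Fin n) → ℝ) :
    ∑ w ∈ walkTuples (k + 2) u j with w 1 = v, F w =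
      ∑ w ∈ walkTuples (k + 1) v j, F (Fin.cons u w) := by
  simp only [walkTuples, filter_filter, sum_filter]
  rw [← (Fin.consEquiv fun _ => Fin n).sum_comp, Fintype.sum_prod_type,
    Fintype.sum_eq_single u fun x hx =>
      sum_eq_zero fun w _ => if_neg (by simp [Fin.consEquiv, hx])]
  exact sum_congr rfl fun w _ => if_congr (by simp [Fin.consEquiv, and_comm]) rfl rfl

lemma sum_walkTuples_filter_eq_edgeBtdwCount (k : ℕ) (u v j : Fin n) :
    ∑ w ∈ walkTuples (k + 1) u j with w 1 = v, walkWeight A θ (k + 1) (walkSeq w) =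
      edgeBtdwCount A θ k u v j := by
  induction k generalizing u v with
  | zero =>
    simp only [walkTuples, filter_filter, sum_filter]
    rw [← (finTwoArrowEquiv (Fin n)).symm.sum_comp, Fintype.sum_prod_type]
    rcases eq_or_ne v j with rfl | hvj
    · simp [walkWeight_one, walkSeq, edgeBtdwCount, ite_and]
    · simp [walkWeight_one, walkSeq, edgeBtdwCount, ite_and, hvj, hvj.symm]
  | succ k ih =>
    calc _ = ∑ w ∈ walkTuples (k + 1) v j,
          A u v * ((if u = w 1 then θ else 1) * walkWeight A θ (k + 1) (walkSeq w)) := by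
          rw [sum_walkTuples_cons]
          refine sum_congr rfl fun w hw => ?_
          rw [walkWeight_walkSeq_cons, (mem_filter.1 hw).2.1]
          ring
      _ = A u v * ∑ t, (if u = t then θ else 1) *
            ∑ w ∈ walkTuples (k + 1) v j with w 1 = t, walkWeight A θ (k + 1) (walkSeq w) := by
          simp_rw [mul_sum, ← sum_fiberwise (walkTuples (k + 1) v j) (· 1)]
          exact sum_congr rfl fun t _ => sum_congr rfl fun w hw => by rw [(mem_filter.1 hw).2]
      _ = edgeBtdwCount A θ (k + 1) u v j := by simp only [ih, edgeBtdwCount]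

lemma btdwCount_succ_apply (hA : ∀ i j, A i j = 0 ∨ A i j = 1) (k : ℕ) (i j : Fin n) :
    btdwCount A θ (k + 1) i j = ∑ v, edgeBtdwCount A θ k i v j := by
  simp only [btdwCount_apply A θ hA, ← sum_walkTuples_filter_eq_edgeBtdwCount, sum_fiberwise]

lemma edgeBtdwCount_succ (hA : ∀ i j, A i j = 0 ∨ A i j = 1) (k : ℕ) (u v j : Fin n) :
    edgeBtdwCount A θ (k + 1) u v j =
      A u v * (btdwCount A θ (k + 1) v j - (1 - θ) * edgeBtdwCount A θ k v u j) := by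
  have hpenalty (t : Fin n) :
      (if u = t then θ else 1) = 1 - (1 - θ) * if u = t then 1 else 0 := by
    split_ifs <;> ring
  simp only [edgeBtdwCount, btdwCount_succ_apply A θ hA, hpenalty, sub_mul, one_mul, mul_assoc,
    ite_mul, zero_mul, sum_sub_distrib, ← mul_sum, Fintype.sum_ite_eq]

lemma mul_edgeBtdwCount_self (hA : ∀ i j, A i j = 0 ∨ A i j = 1) (k : ℕ) (u v j : Fin n) :
    A u v * edgeBtdwCount A θ k u v j = edgeBtdwCount A θ k u v j := by
  have hAA : A u v * A u v = A u v := by rcases hA u v with h | h <;> simp [h]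
  cases k <;> rw [edgeBtdwCount, ← mul_assoc, hAA]

-- Walks `i → v → i → ⋯` without the penalty for their first backtrack, and walks whose
-- first edge is reciprocated.
noncomputable def returnCount (k : ℕ) : Matrix (Fin n) (Fin n) ℝ :=
  of fun i j => ∑ v, A i v * edgeBtdwCount A θ k v i j

noncomputable def reciprocalCount (k : ℕ) : Matrix (Fin n) (Fin n) ℝ :=
  of fun i j => ∑ v, recipMat A i v * edgeBtdwCount A θ k i v j

lemma btdwCount_add_two (hA : ∀ i j, A i j = 0 ∨ A i j = 1) (k : ℕ) :
    btdwCount A θ (k + 2) = A * btdwCount A θ (k + 1) - (1 - θ) • returnCount A θ k := by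
  ext i j
  simp only [btdwCount_succ_apply A θ hA (k + 1), edgeBtdwCount_succ A θ hA, returnCount,
    Matrix.sub_apply, Matrix.smul_apply, mul_apply, of_apply, smul_eq_mul, mul_sum,
    ← sum_sub_distrib]
  exact sum_congr rfl fun v _ => by ring

lemma returnCount_succ (hA : ∀ i j, A i j = 0 ∨ A i j = 1) (k : ℕ) :
    returnCount A θ (k + 1) =
      degDiag A * btdwCount A θ (k + 1) - (1 - θ) • reciprocalCount A θ k := by
  ext i j
  rw [Matrix.sub_apply, degDiag, diagonal_mul]
  simp only [returnCount, reciprocalCount, edgeBtdwCount_succ A θ hA, recipMat, Matrix.smul_apply,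
    mul_apply, of_apply, smul_eq_mul, mul_sum, sum_mul, ← sum_sub_distrib]
  exact sum_congr rfl fun v _ => by ring

lemma reciprocalCount_succ (hA : ∀ i j, A i j = 0 ∨ A i j = 1) (k : ℕ) :
    reciprocalCount A θ (k + 1) =
      recipMat A * btdwCount A θ (k + 1) - (1 - θ) • returnCount A θ k := by
  ext i j
  simp only [returnCount, reciprocalCount, edgeBtdwCount_succ A θ hA, recipMat,
    Matrix.sub_apply, Matrix.smul_apply, mul_apply, of_apply, smul_eq_mul, mul_sum,
    ← sum_sub_distrib]
  refine sum_congr rfl fun v _ => ?_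
  have hAA : A i v * A i v = A i v := by rcases hA i v with h | h <;> simp [h]
  linear_combination (A v i * btdwCount A θ (k + 1) v j - (1 - θ) * A v i *
    edgeBtdwCount A θ k v i j) * hAA - (1 - θ) * A i v * mul_edgeBtdwCount_self A θ hA k v i j

lemma btdwCount_add_four (hA : ∀ i j, A i j = 0 ∨ A i j = 1) (k : ℕ) :
    btdwCount A θ (k + 4) = (-((1 - θ) ^ 2) • (A - recipMat A)) * btdwCount A θ (k + 1) +
      ((1 - θ) • ((1 - θ) • 1 - degDiag A)) * btdwCount A θ (k + 2) +
      A * btdwCount A θ (k + 3) := by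
  rw [btdwCount_add_two A θ hA (k + 2), returnCount_succ A θ hA (k + 1),
    reciprocalCount_succ A θ hA k, btdwCount_add_two A θ hA k]
  simp only [sub_mul, smul_mul, one_mul, smul_sub, smul_smul]
  module

lemma Zmat_mul_stack3 (X Y W : Matrix (Fin n) (Fin n) ℝ) :
    Zmat A θ * stack3 X Y W = stack3 Y W ((-((1 - θ) ^ 2) • (A - recipMat A)) * X +
      ((1 - θ) • ((1 - θ) • 1 - degDiag A)) * Y + A * W) := by
  rw [Zmat, stack3, fromBlocks_mul_fromRows, fromBlocks_mul_fromRows, fromCols_mul_fromRows,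
    stack3, fromRows_mul]
  ext i j
  rcases i with (i | i) | i <;> simp

lemma Zmat_pow_mul_stack3 (hA : ∀ i j, A i j = 0 ∨ A i j = 1) (k : ℕ) :
    Zmat A θ ^ k * stack3 (btdwCount A θ 1) (btdwCount A θ 2) (btdwCount A θ 3) =
      stack3 (btdwCount A θ (k + 1)) (btdwCount A θ (k + 2)) (btdwCount A θ (k + 3)) := by
  induction k with
  | zero => rw [pow_zero, Matrix.one_mul]
  | succ k ih =>
    rw [pow_succ', Matrix.mul_assoc, ih, Zmat_mul_stack3, ← btdwCount_add_four A θ hA]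

end Btdw

theorem btdw_radius_of_convergence_general {n : ℕ} (A : Matrix (Fin n) (Fin n) ℝ)
    (hA01 : ∀ i j, A i j = 0 ∨ A i j = 1)
    (θ : ℝ) (α : ℝ) (hα : 0 ≤ α)
    (hρ : ENNReal.ofReal α * spectralRadius ℂ ((Zmat A θ).map Complex.ofReal) < 1) :
    Summable fun k : ℕ => α ^ k • btdwCount A θ k := by
  have hZ := ((Zmat A θ).summable_smul_pow_of_mul_spectralRadius_lt_one hα hρ).matrix_mul_right
    (stack3 (btdwCount A θ 1) (btdwCount A θ 2) (btdwCount A θ 3))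
  refine Pi.summable.2 fun i => Pi.summable.2 fun j => ?_
  simp_rw [Matrix.smul_mul, Btdw.Zmat_pow_mul_stack3 A θ hA01] at hZ
  rw [← summable_nat_add_iff 3]
  refine ((Pi.summable.1 (Pi.summable.1 hZ (Sum.inr i)) j).mul_left (α ^ 3)).congr fun k => ?_
  simp only [stack3, Matrix.smul_apply, fromRows_apply_inr, smul_eq_mul, pow_add]
  ring

/-- Theorem 6.1: if `α ρ(Z) < 1`, where `ρ(Z)` is the spectral radius of the block
matrix `Z`, then the power series `Σ α^k q_k(A)` converges. -/
theorem btdw_radius_of_convergence {n : ℕ} (hn : 1 ≤ n) (A : Matrix (Fin n) (Fin n) ℝ)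
    (hA01 : ∀ i j, A i j = 0 ∨ A i j = 1) (hAdiag : ∀ i, A i i = 0)
    (θ : ℝ) (hθ0 : 0 ≤ θ) (hθ1 : θ ≤ 1) (α : ℝ) (hα : 0 ≤ α)
    (hρ : ENNReal.ofReal α * spectralRadius ℂ ((Zmat A θ).map Complex.ofReal) < 1) :
    Summable fun k : ℕ => α ^ k • btdwCount A θ k :=
  btdw_radius_of_convergence_general A hA01 θ α hα hρ
end

section
/- For every k ≥ 0, the block matrix Z satisfies Z^k · [I; A; A² − μD] = [q_k(A); q_{k+1}(A); q_{k+2}(A)], where [X; Y; W] denotes the 3n×n matrix obtained by stacking the n×n blocks X, Y, W vertically and μ = 1 − θ. -/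
open Matrix Finset

/-!
Read as a sequence `u`, a walk has weight a product of step weights: the step into `u (s + 1)`
carries `a_{u s, u (s+1)}`, and a factor `θ` when it returns to `u (s - 1)`. Remembering the vertex
`p` through which a walk enters its start, the counts `N_k(p) = memCount A θ k p` obey the
first-step recursion `N_{k+1}(p)_{ij} = ∑_m a_{im} θ^[p = m] N_k(i)_{mj}`, and `q_k = N_k(none)`.
Memory only affects an immediate return, so
`N_{k+1}(x)_{ij} = (q_{k+1})_{ij} - μ a_{ix} N_k(i)_{xj}`. Using this twice, together with
`s_{im} a_{im} = s_{im} a_{mi} = s_{im}` for a 0/1 matrix, eliminates the memory terms and leaves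
`q_{k+3} = A q_{k+2} + μ (μ I - D) q_{k+1} - μ² (A - S) q_k`: the last block row of `Z`, whose
other rows just shift the stack. The base case is `q_0 = I`, `q_1 = A`, `q_2 = A² - μ D`.
-/

-- The sequence `w'` through which `btdwCount` reads a walk `w`.
def wrapSeq {α : Type*} {k : ℕ} (w : Fin (k + 1) → α) (s : ℕ) : α :=
  w ⟨s % (k + 1), Nat.mod_lt s k.succ_pos⟩

lemma wrapSeq_cons_zero {α : Type*} {k : ℕ} (x : α) (v : Fin (k + 1) → α) :
    wrapSeq (Fin.cons x v : Fin (k + 2) → α) 0 = x := by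
  simp [wrapSeq]

lemma wrapSeq_cons_succ {α : Type*} {k s : ℕ} (x : α) (v : Fin (k + 1) → α) (hs : s ≤ k) :
    wrapSeq (Fin.cons x v : Fin (k + 2) → α) (s + 1) = wrapSeq v s := by
  have hsucc : (⟨(s + 1) % (k + 2), Nat.mod_lt _ (k + 1).succ_pos⟩ : Fin (k + 2)) =
      Fin.succ ⟨s % (k + 1), Nat.mod_lt s k.succ_pos⟩ := by
    ext
    simp [Nat.mod_eq_of_lt (show s + 1 < k + 2 by omega),
      Nat.mod_eq_of_lt (show s < k + 1 by omega)]
  rw [wrapSeq, hsucc, Fin.cons_succ, wrapSeq]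

section

variable {n : ℕ}

def backWeight (θ : ℝ) (p : Option (Fin n)) (m : Fin n) : ℝ :=
  if p = some m then θ else 1

@[simp] lemma backWeight_none (θ : ℝ) (m : Fin n) : backWeight θ none m = 1 := by
  simp [backWeight]

def prevVertex (p : Option (Fin n)) (u : ℕ → Fin n) : ℕ → Option (Fin n)
  | 0 => p
  | s + 1 => some (u s)

variable (A : Matrix (Fin n) (Fin n) ℝ) (θ : ℝ)

def stepWeight (p : Option (Fin n)) (u : ℕ → Fin n) (s : ℕ) : ℝ :=
  A (u s) (u (s + 1)) * backWeight θ (prevVertex p u s) (u (s + 1))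

lemma prod_stepWeight_succ (p : Option (Fin n)) {k : ℕ} {u v : ℕ → Fin n}
    (huv : ∀ s ≤ k, u (s + 1) = v s) :
    ∏ s ∈ range (k + 1), stepWeight A θ p u s =
      A (u 0) (v 0) * backWeight θ p (v 0) * ∏ s ∈ range k, stepWeight A θ (some (u 0)) v s := by
  rw [prod_range_succ', mul_comm]
  congr 1
  · simp [stepWeight, prevVertex, huv 0 (Nat.zero_le k)]
  · refine prod_congr rfl fun s hs => ?_
    have hs : s < k := mem_range.mp hs
    have hprev : prevVertex p u (s + 1) = prevVertex (some (u 0)) v s := by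
      cases s with
      | zero => rfl
      | succ s => simp [prevVertex, huv s (by omega)]
    simp only [stepWeight, hprev, huv s (by omega), huv (s + 1) hs]

lemma prod_stepWeight_none (u : ℕ → Fin n) (k : ℕ) :
    ∏ s ∈ range k, stepWeight A θ none u s =
      (∏ s ∈ range k, A (u s) (u (s + 1))) * θ ^ #{s ∈ range (k - 1) | u s = u (s + 2)} := by
  simp only [stepWeight, prod_mul_distrib]
  congr 1
  cases k with
  | zero => simp
  | succ k =>
    classical
    rw [prod_range_succ', Nat.add_sub_cancel]
    simp only [prevVertex, backWeight, Option.some.injEq, prod_ite, prod_const, one_pow,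
      mul_one, reduceCtorEq, if_false]

lemma prod_range_apply_eq_ite_of_zero_or_one (hA : ∀ i j, A i j = 0 ∨ A i j = 1)
    (u : ℕ → Fin n) (k : ℕ) :
    ∏ s ∈ range k, A (u s) (u (s + 1)) =
      if ∀ s ∈ range k, A (u s) (u (s + 1)) = 1 then 1 else 0 := by
  classical
  rw [← prod_boole]
  refine prod_congr rfl fun s _ => ?_
  rcases hA (u s) (u (s + 1)) with h | h <;> simp [h]

open scoped Classical in
noncomputable def memWalkTerm (k : ℕ) (p : Option (Fin n)) (i j : Fin n)
    (w : Fin (k + 1) → Fin n) : ℝ :=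
  if wrapSeq w 0 = i ∧ wrapSeq w k = j then ∏ s ∈ range k, stepWeight A θ p (wrapSeq w) s else 0

noncomputable def memCount : ℕ → Option (Fin n) → Matrix (Fin n) (Fin n) ℝ
  | 0, _ => 1
  | k + 1, p => of fun i j => ∑ m, A i m * backWeight θ p m * memCount k (some i) m j

@[simp] lemma memCount_zero (p : Option (Fin n)) : memCount A θ 0 p = 1 := rfl

lemma sum_memWalkTerm_zero (p : Option (Fin n)) (i j : Fin n) :
    ∑ w, memWalkTerm A θ 0 p i j w = (1 : Matrix (Fin n) (Fin n) ℝ) i j := by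
  rw [← (Equiv.funUnique (Fin 1) (Fin n)).symm.sum_comp]
  by_cases hij : i = j
  · subst hij
    simp [memWalkTerm, wrapSeq]
  · simp [memWalkTerm, wrapSeq, hij]

lemma memWalkTerm_eq_zero_of_ne {k : ℕ} (p : Option (Fin n)) {i : Fin n} (j : Fin n)
    {w : Fin (k + 1) → Fin n} (h : wrapSeq w 0 ≠ i) : memWalkTerm A θ k p i j w = 0 :=
  if_neg fun hw => h hw.1

lemma memWalkTerm_cons (k : ℕ) (p : Option (Fin n)) (i j x : Fin n) (v : Fin (k + 1) → Fin n) :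
    memWalkTerm A θ (k + 1) p i j (Fin.cons x v) =
      if x = i then
        A i (wrapSeq v 0) * backWeight θ p (wrapSeq v 0) *
          memWalkTerm A θ k (some i) (wrapSeq v 0) j v
      else 0 := by
  have hcons : ∀ s ≤ k, wrapSeq (Fin.cons x v : Fin (k + 2) → Fin n) (s + 1) = wrapSeq v s :=
    fun s hs => wrapSeq_cons_succ x v hs
  rw [memWalkTerm, memWalkTerm, prod_stepWeight_succ A θ p hcons, wrapSeq_cons_zero,
    hcons k le_rfl]
  by_cases hx : x = i
  · subst hx
    by_cases hj : wrapSeq v k = j <;> simp [hj]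
  · simp [hx]

lemma sum_memWalkTerm_succ (k : ℕ) (p : Option (Fin n)) (i j : Fin n) :
    ∑ w, memWalkTerm A θ (k + 1) p i j w =
      ∑ m, A i m * backWeight θ p m * ∑ v, memWalkTerm A θ k (some i) m j v := by
  calc ∑ w, memWalkTerm A θ (k + 1) p i j w
      = ∑ x, ∑ v, memWalkTerm A θ (k + 1) p i j (Fin.cons x v) := by
        rw [← (Fin.consEquiv fun _ => Fin n).sum_comp, Fintype.sum_prod_type]
        rfl
    _ = ∑ v, A i (wrapSeq v 0) * backWeight θ p (wrapSeq v 0) *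
          memWalkTerm A θ k (some i) (wrapSeq v 0) j v := by
        simp only [memWalkTerm_cons]
        rw [sum_comm]
        simp
    _ = ∑ m, A i m * backWeight θ p m * ∑ v, memWalkTerm A θ k (some i) m j v := by
        simp_rw [mul_sum]
        rw [sum_comm]
        refine sum_congr rfl fun v _ => ?_
        rw [sum_eq_single (wrapSeq v 0) (fun m _ hm => ?_) (absurd (mem_univ _))]
        rw [memWalkTerm_eq_zero_of_ne A θ _ j (Ne.symm hm), mul_zero]

lemma sum_memWalkTerm (k : ℕ) (p : Option (Fin n)) (i j : Fin n) :
    ∑ w, memWalkTerm A θ k p i j w = memCount A θ k p i j := by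
  induction k generalizing p i with
  | zero => rw [sum_memWalkTerm_zero]; rfl
  | succ k ih => simp only [sum_memWalkTerm_succ, ih]; rfl

lemma btdwCount_eq_memCount (hA : ∀ i j, A i j = 0 ∨ A i j = 1) (k : ℕ) :
    btdwCount A θ k = memCount A θ k none := by
  ext i j
  rw [← sum_memWalkTerm, btdwCount, of_apply]
  refine sum_congr rfl fun w _ => ?_
  rw [memWalkTerm, prod_stepWeight_none, prod_range_apply_eq_ite_of_zero_or_one A hA]
  change (if wrapSeq w 0 = i ∧ wrapSeq w k = j ∧
      ∀ s ∈ range k, A (wrapSeq w s) (wrapSeq w (s + 1)) = 1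
    then θ ^ #{s ∈ range (k - 1) | wrapSeq w s = wrapSeq w (s + 2)} else 0) = _
  simp only [← and_assoc, ite_and, ite_mul, one_mul, zero_mul]

lemma memCount_succ_none_apply (k : ℕ) (i j : Fin n) :
    memCount A θ (k + 1) none i j = ∑ m, A i m * memCount A θ k (some i) m j := by
  simp [memCount]

lemma memCount_succ_some_apply (k : ℕ) (x i j : Fin n) :
    memCount A θ (k + 1) (some x) i j =
      memCount A θ (k + 1) none i j - (1 - θ) * A i x * memCount A θ k (some i) x j := by
  have hweight : ∀ m, A i m * backWeight θ (some x) m * memCount A θ k (some i) m j =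
      A i m * memCount A θ k (some i) m j -
        (1 - θ) * if m = x then A i x * memCount A θ k (some i) x j else 0 := by
    intro m
    by_cases hm : m = x
    · subst hm
      simp [backWeight]
      ring
    · simp [backWeight, Ne.symm hm, hm]
  rw [memCount_succ_none_apply]
  change ∑ m, A i m * backWeight θ (some x) m * memCount A θ k (some i) m j = _
  rw [sum_congr rfl fun m _ => hweight m, sum_sub_distrib, ← mul_sum, sum_ite_eq' univ x,
    if_pos (mem_univ x), mul_assoc]

lemma memCount_none_add_two_apply (k : ℕ) (i j : Fin n) :
    memCount A θ (k + 2) none i j = (A * memCount A θ (k + 1) none) i j -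
      (1 - θ) * ∑ m, recipMat A i m * memCount A θ k (some m) i j := by
  simp only [memCount_succ_none_apply A θ (k + 1), memCount_succ_some_apply, mul_sub,
    sum_sub_distrib, mul_apply, mul_sum, recipMat, of_apply]
  congr 1
  refine sum_congr rfl fun m _ => ?_
  ring

lemma memCount_one_none : memCount A θ 1 none = A := by
  ext i j
  simp [memCount_succ_none_apply, one_apply]

lemma memCount_two_none : memCount A θ 2 none = A * A - (1 - θ) • degDiag A := by
  ext i j
  rw [memCount_succ_none_apply]
  simp only [memCount_succ_some_apply, zero_add, memCount_one_none, memCount_zero, one_apply,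
    Matrix.sub_apply, Matrix.smul_apply, smul_eq_mul, degDiag, diagonal_apply, mul_apply, mul_sub,
    sum_sub_distrib]
  by_cases hij : i = j
  · subst hij
    simp only [if_true, mul_one, mul_sum]
    congr 1
    exact sum_congr rfl fun m _ => by ring
  · simp [hij]

lemma recipMat_apply_mul_apply (hA : ∀ i j, A i j = 0 ∨ A i j = 1) (i m : Fin n) :
    recipMat A i m * A i m = recipMat A i m := by
  rcases hA i m with h | h <;> simp [recipMat, h]

lemma recipMat_apply_mul_apply_swap (hA : ∀ i j, A i j = 0 ∨ A i j = 1) (i m : Fin n) :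
    recipMat A i m * A m i = recipMat A i m := by
  rcases hA m i with h | h <;> simp [recipMat, h]

lemma mul_self_apply_self_eq_sum_recipMat (i : Fin n) : (A * A) i i = ∑ m, recipMat A i m := by
  simp [mul_apply, recipMat]

lemma sum_recipMat_mul_memCount_succ_some (hA : ∀ i j, A i j = 0 ∨ A i j = 1) (k : ℕ)
    (i j : Fin n) :
    ∑ m, recipMat A i m * memCount A θ (k + 1) (some m) i j =
      (A * A) i i * memCount A θ (k + 1) none i j -
        (1 - θ) * ∑ m, recipMat A i m * memCount A θ k (some i) m j := by
  simp only [memCount_succ_some_apply, mul_sub, sum_sub_distrib,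
    mul_self_apply_self_eq_sum_recipMat, sum_mul, mul_sum]
  congr 1
  refine sum_congr rfl fun m _ => ?_
  linear_combination (1 - θ) * memCount A θ k (some i) m j * recipMat_apply_mul_apply A hA i m

lemma sum_recipMat_mul_memCount_some (hA : ∀ i j, A i j = 0 ∨ A i j = 1) (k : ℕ) (i j : Fin n) :
    ∑ m, recipMat A i m * memCount A θ k (some i) m j =
      ((recipMat A - A) * memCount A θ k none + memCount A θ (k + 1) none) i j := by
  cases k with
  | zero => simp [memCount_one_none, ← mul_apply]
  | succ k =>
    have hsum : ∑ m, recipMat A i m * memCount A θ (k + 1) (some i) m j =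
        (recipMat A * memCount A θ (k + 1) none) i j -
          (1 - θ) * ∑ m, recipMat A i m * memCount A θ k (some m) i j := by
      simp only [memCount_succ_some_apply, mul_sub, sum_sub_distrib, mul_apply, mul_sum]
      congr 1
      refine sum_congr rfl fun m _ => ?_
      linear_combination
        (1 - θ) * memCount A θ k (some m) i j * recipMat_apply_mul_apply_swap A hA i m
    rw [hsum, Matrix.add_apply, Matrix.sub_mul, Matrix.sub_apply]
    linear_combination (norm := ring_nf) -memCount_none_add_two_apply A θ k i j

lemma memCount_none_add_three (hA : ∀ i j, A i j = 0 ∨ A i j = 1) (k : ℕ) :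
    (-((1 - θ) ^ 2) • (A - recipMat A)) * memCount A θ k none +
        ((1 - θ) • ((1 - θ) • 1 - degDiag A)) * memCount A θ (k + 1) none +
        A * memCount A θ (k + 2) none =
      memCount A θ (k + 3) none := by
  ext i j
  have hS := sum_recipMat_mul_memCount_some A θ hA k i j
  have hS' := sum_recipMat_mul_memCount_succ_some A θ hA k i j
  have hq := memCount_none_add_two_apply A θ (k + 1) i j
  simp only [Matrix.add_apply, Matrix.sub_mul, Matrix.sub_apply, Matrix.smul_mul,
    Matrix.smul_apply, smul_eq_mul, Matrix.one_mul, degDiag, diagonal_mul] at hS hq ⊢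
  linear_combination -hq + (1 - θ) * hS' - (1 - θ) ^ 2 * hS

lemma Zmat_mul_stack3 (X Y W : Matrix (Fin n) (Fin n) ℝ) :
    Zmat A θ * stack3 X Y W =
      stack3 Y W ((-((1 - θ) ^ 2) • (A - recipMat A)) * X +
        ((1 - θ) • ((1 - θ) • 1 - degDiag A)) * Y + A * W) := by
  simp only [Zmat, stack3, fromBlocks_mul_fromRows, fromCols_mul_fromRows]
  ext ((i | i) | i) j <;> simp

end

theorem btdw_Z_power_general {n : ℕ} (A : Matrix (Fin n) (Fin n) ℝ)
    (hA01 : ∀ i j, A i j = 0 ∨ A i j = 1)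
    (θ : ℝ) (μ : ℝ) (hμ : μ = 1 - θ) (k : ℕ) :
    Zmat A θ ^ k * stack3 1 A (A * A - μ • degDiag A) =
      stack3 (btdwCount A θ k) (btdwCount A θ (k + 1)) (btdwCount A θ (k + 2)) := by
  subst hμ
  simp only [btdwCount_eq_memCount A θ hA01]
  induction k with
  | zero => rw [pow_zero, Matrix.one_mul, memCount_zero, memCount_one_none, memCount_two_none]
  | succ k ih =>
    rw [pow_succ', Matrix.mul_assoc, ih, Zmat_mul_stack3, memCount_none_add_three A θ hA01]

/-- For every `k ≥ 0`, `Z^k [I; A; A² − μD] = [q_k(A); q_{k+1}(A); q_{k+2}(A)]`. -/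
theorem btdw_Z_power {n : ℕ} (hn : 1 ≤ n) (A : Matrix (Fin n) (Fin n) ℝ)
    (hA01 : ∀ i j, A i j = 0 ∨ A i j = 1) (hAdiag : ∀ i, A i i = 0)
    (θ : ℝ) (hθ0 : 0 ≤ θ) (hθ1 : θ ≤ 1) (μ : ℝ) (hμ : μ = 1 - θ) (k : ℕ) :
    Zmat A θ ^ k * stack3 1 A (A * A - μ • degDiag A) =
      stack3 (btdwCount A θ k) (btdwCount A θ (k + 1)) (btdwCount A θ (k + 2)) :=
  btdw_Z_power_general A hA01 θ μ hμ k
end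

section
/- Let A be the adjacency matrix of an undirected d-regular graph (so A is symmetric, every row of A sums to d ≥ 1, D = dI and S = A), let θ ∈ [0,1] with d − 1 + θ > 0, and set μ = 1 − θ. Then at α = 1/(d − 1 + θ) the coefficient matrix M(α) = I − αA − μα²(μI − D) + μ²α³(A − S) of the backtrack-downweighted Katz system is singular; indeed M(α)·𝟏 = 0 at this value of α. -/
/-! For a symmetric 0/1 matrix, `S = A` and `D = diag(A𝟏)`, so on a `d`-regular graph the
all-ones vector is an eigenvector of `M(α)` with eigenvalue `1 − αd − μα²(μ − d)`.
With `c = d − 1 + θ` we have `μ = d − c`, and at `α = 1/c` this eigenvalue is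
`1 − d/c + μ/c = (c − d + μ)/c = 0`. -/

open Matrix Finset

theorem Matrix.not_isUnit_of_mulVec_eq_zero {ι R : Type*} [Fintype ι] [DecidableEq ι]
    [Semiring R] {M : Matrix ι ι R} {v : ι → R} (hv : v ≠ 0) (hMv : M *ᵥ v = 0) :
    ¬IsUnit M :=
  fun hM => hv (mulVec_injective_of_isUnit hM (by rw [hMv, mulVec_zero]))

section ZeroOneSymmetric

variable {n : ℕ} {A : Matrix (Fin n) (Fin n) ℝ}

theorem recipMat_eq_self (hA01 : ∀ i j, A i j = 0 ∨ A i j = 1) (hsym : ∀ i j, A i j = A j i) :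
    recipMat A = A := by
  ext i j
  rcases hA01 i j with h | h <;> simp [recipMat, ← hsym i j, h]

theorem degDiag_eq_diagonal_mulVec_one (hA01 : ∀ i j, A i j = 0 ∨ A i j = 1)
    (hsym : ∀ i j, A i j = A j i) : degDiag A = diagonal (A *ᵥ fun _ => 1) := by
  have hsq : ∀ i j, A i j * A j i = A i j := fun i j => by
    rcases hA01 i j with h | h <;> simp [← hsym i j, h]
  simp [degDiag, Matrix.mul_apply, hsq, mulVec, dotProduct]

end ZeroOneSymmetric

noncomputable def btdwKatzMatrix {n : ℕ} (A : Matrix (Fin n) (Fin n) ℝ) (μ α : ℝ) :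
    Matrix (Fin n) (Fin n) ℝ :=
  1 - α • A - (μ * α ^ 2) • (μ • 1 - degDiag A) + (μ ^ 2 * α ^ 3) • (A - recipMat A)

theorem btdwKatzMatrix_mulVec_one {n : ℕ} {A : Matrix (Fin n) (Fin n) ℝ}
    (hA01 : ∀ i j, A i j = 0 ∨ A i j = 1) (hsym : ∀ i j, A i j = A j i)
    {d : ℝ} (hreg : A *ᵥ (fun _ => (1 : ℝ)) = fun _ => d) (μ α : ℝ) :
    btdwKatzMatrix A μ α *ᵥ (fun _ => 1) = fun _ => 1 - α * d - μ * α ^ 2 * (μ - d) := by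
  rw [btdwKatzMatrix, recipMat_eq_self hA01 hsym, degDiag_eq_diagonal_mulVec_one hA01 hsym, hreg]
  ext i
  simp [sub_mulVec, smul_mulVec, hreg]

theorem one_sub_mul_sub_mul_sq_eq_zero {d θ : ℝ} (h : d - 1 + θ ≠ 0) :
    1 - 1 / (d - 1 + θ) * d - (1 - θ) * (1 / (d - 1 + θ)) ^ 2 * ((1 - θ) - d) = 0 := by
  field_simp
  ring

theorem btdw_regular_singular_general {n : ℕ} (hn : 1 ≤ n) (A : Matrix (Fin n) (Fin n) ℝ)
    (hA01 : ∀ i j, A i j = 0 ∨ A i j = 1)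
    (hsym : ∀ i j, A i j = A j i)
    (d : ℕ) (hreg : A *ᵥ (fun _ => (1 : ℝ)) = fun _ => (d : ℝ))
    (θ : ℝ) (hpos : 0 < (d : ℝ) - 1 + θ)
    (μ : ℝ) (hμ : μ = 1 - θ)
    (α : ℝ) (hα : α = 1 / ((d : ℝ) - 1 + θ)) :
    (1 - α • A - (μ * α ^ 2) • (μ • 1 - degDiag A) +
        (μ ^ 2 * α ^ 3) • (A - recipMat A)) *ᵥ (fun _ => (1 : ℝ)) = 0 ∧
    ¬ IsUnit (1 - α • A - (μ * α ^ 2) • (μ • 1 - degDiag A) +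
        (μ ^ 2 * α ^ 3) • (A - recipMat A)) := by
  have hker : btdwKatzMatrix A μ α *ᵥ (fun _ => 1) = 0 := by
    rw [btdwKatzMatrix_mulVec_one hA01 hsym hreg, hμ, hα,
      one_sub_mul_sub_mul_sq_eq_zero hpos.ne']
    rfl
  have hone : (fun _ : Fin n => (1 : ℝ)) ≠ 0 := fun h => one_ne_zero (congrFun h ⟨0, hn⟩)
  exact ⟨hker, not_isUnit_of_mulVec_eq_zero hone hker⟩

/-- On an undirected `d`-regular graph with `d − 1 + θ > 0`, the coefficient matrix of
the backtrack-downweighted Katz system becomes singular at `α = 1/(d − 1 + θ)`;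
indeed it maps the all-ones vector to zero. -/
theorem btdw_regular_singular {n : ℕ} (hn : 1 ≤ n) (A : Matrix (Fin n) (Fin n) ℝ)
    (hA01 : ∀ i j, A i j = 0 ∨ A i j = 1) (hAdiag : ∀ i, A i i = 0)
    (hsym : ∀ i j, A i j = A j i)
    (d : ℕ) (hd : 1 ≤ d) (hreg : A *ᵥ (fun _ => (1 : ℝ)) = fun _ => (d : ℝ))
    (θ : ℝ) (hθ0 : 0 ≤ θ) (hθ1 : θ ≤ 1) (hpos : 0 < (d : ℝ) - 1 + θ)
    (μ : ℝ) (hμ : μ = 1 - θ)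
    (α : ℝ) (hα : α = 1 / ((d : ℝ) - 1 + θ)) :
    (1 - α • A - (μ * α ^ 2) • (μ • 1 - degDiag A) +
        (μ ^ 2 * α ^ 3) • (A - recipMat A)) *ᵥ (fun _ => (1 : ℝ)) = 0 ∧
    ¬ IsUnit (1 - α • A - (μ * α ^ 2) • (μ • 1 - degDiag A) +
        (μ ^ 2 * α ^ 3) • (A - recipMat A)) :=
  btdw_regular_singular_general hn A hA01 hsym d hreg θ hpos μ hμ α hα
end
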